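/- arXiv:1910.02418 — 2 statements merged into one kernel-verified Lean document; each statement's English description precedes it below -/
import Mathlib

section
/- For every integer n ≥ 36, f(n)² − f(n−8)·f(n+8) > 0. -/
/-!
Among the `2 ^ n` subsets of `{1, …, n}`, those with `gcd ≠ 1` all lie in the set of multiples
of some `d ∈ [2, n]`, which has `2 ^ ⌊n/d⌋` subsets; so they number at least `2 ^ ⌊n/2⌋` (the even
subsets) and at most `2 ^ ⌊n/2⌋ + (n - 2) 2 ^ ⌊n/3⌋ < 8 · 2 ^ ⌊n/2⌋`. Hence, with `x = 2 ^ (n - 8)`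
and `y = 2 ^ ⌊(n - 8)/2⌋`, we have `f (n - 8) ≤ x - y`, `f (n + 8) ≤ 2 ^ 16 x` and
`f n > 2 ^ 8 x - 2 ^ 7 y`, and `(2 ^ 8 x - 2 ^ 7 y) ^ 2 ≥ 2 ^ 16 x (x - y)`.
-/

/-- `f n` is the number of relatively prime subsets of `{1, 2, ..., n}`,
i.e. subsets `A` with `gcd A = 1` (such subsets are automatically nonempty). -/
def f (n : ℕ) : ℕ :=
  ((Finset.Icc 1 n).powerset.filter (fun A => A.gcd id = 1)).card

open Finset

def nonCoprimeSubsets (n : ℕ) : Finset (Finset ℕ) :=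
  {A ∈ (Icc 1 n).powerset | A.gcd id ≠ 1}

lemma card_filter_dvd_Icc_one (d n : ℕ) : #{x ∈ Icc 1 n | d ∣ x} = n / d := by
  rw [show Icc 1 n = Ioc 0 n from Icc_add_one_left_eq_Ioc 0 n]
  exact Nat.Ioc_filter_dvd_card_eq_div n d

lemma f_add_card_nonCoprimeSubsets (n : ℕ) : f n + #(nonCoprimeSubsets n) = 2 ^ n := by
  rw [f, nonCoprimeSubsets, card_filter_add_card_filter_not, card_powerset, Nat.card_Icc,
    Nat.add_sub_cancel]

lemma two_pow_div_le_card_nonCoprimeSubsets (n : ℕ) {d : ℕ} (hd : 2 ≤ d) :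
    2 ^ (n / d) ≤ #(nonCoprimeSubsets n) := by
  rw [← card_filter_dvd_Icc_one d n, ← card_powerset]
  refine card_le_card fun A hA => ?_
  rw [mem_powerset] at hA
  have hdvd : d ∣ A.gcd id := dvd_gcd fun x hx => (mem_filter.1 (hA hx)).2
  refine mem_filter.2 ⟨mem_powerset.2 (hA.trans (filter_subset _ _)), fun h => ?_⟩
  rw [h, Nat.dvd_one] at hdvd
  omega

lemma card_nonCoprimeSubsets_le_sum {n : ℕ} (hn : 2 ≤ n) :
    #(nonCoprimeSubsets n) ≤ ∑ d ∈ Icc 2 n, 2 ^ (n / d) := by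
  calc #(nonCoprimeSubsets n)
      ≤ #((Icc 2 n).biUnion fun d => {x ∈ Icc 1 n | d ∣ x}.powerset) := card_le_card ?_
    _ ≤ ∑ d ∈ Icc 2 n, #{x ∈ Icc 1 n | d ∣ x}.powerset := card_biUnion_le
    _ = ∑ d ∈ Icc 2 n, 2 ^ (n / d) := by simp only [card_powerset, card_filter_dvd_Icc_one]
  intro A hA
  obtain ⟨hA, hgcd⟩ := mem_filter.1 hA
  rw [mem_powerset] at hA
  simp only [mem_biUnion, mem_powerset, mem_Icc]
  obtain rfl | ⟨x, hx⟩ := A.eq_empty_or_nonempty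
  · exact ⟨2, ⟨le_rfl, hn⟩, empty_subset _⟩
  have hxn := mem_Icc.1 (hA hx)
  have hg : A.gcd id ∣ x := gcd_dvd hx
  have hg0 : A.gcd id ≠ 0 := fun h => by simp [h] at hg; omega
  refine ⟨A.gcd id, ⟨by omega, (Nat.le_of_dvd (by omega) hg).trans hxn.2⟩, fun y hy => ?_⟩
  exact mem_filter.2 ⟨hA hy, gcd_dvd hy⟩

lemma sum_Icc_three_two_pow_div_le (n : ℕ) :
    ∑ d ∈ Icc 3 n, 2 ^ (n / d) ≤ (n - 2) * 2 ^ (n / 3) := by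
  simpa using sum_le_card_nsmul (Icc 3 n) _ _ fun d hd =>
    Nat.pow_le_pow_right two_pos (Nat.div_le_div_left (mem_Icc.1 hd).1 three_pos)

lemma sub_two_mul_two_pow_div_three_lt (n : ℕ) : (n - 2) * 2 ^ (n / 3) < 7 * 2 ^ (n / 2) := by
  have hsub : n - 2 < 7 * 2 ^ (n / 2 - n / 3) :=
    calc n - 2 < 7 * (n / 6 + 1) := by omega
      _ ≤ 7 * 2 ^ (n / 6) := Nat.mul_le_mul_left _ Nat.lt_two_pow_self
      _ ≤ 7 * 2 ^ (n / 2 - n / 3) :=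
        Nat.mul_le_mul_left _ (Nat.pow_le_pow_right two_pos (by omega))
  calc (n - 2) * 2 ^ (n / 3) < 7 * 2 ^ (n / 2 - n / 3) * 2 ^ (n / 3) :=
        Nat.mul_lt_mul_of_pos_right hsub (by positivity)
    _ = 7 * 2 ^ (n / 2) := by rw [mul_assoc, ← pow_add, Nat.sub_add_cancel (by omega)]

lemma f_le_two_pow_sub (n : ℕ) : (f n : ℤ) ≤ 2 ^ n - 2 ^ (n / 2) := by
  have hcount := f_add_card_nonCoprimeSubsets n
  have heven := two_pow_div_le_card_nonCoprimeSubsets n (le_refl 2)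
  have : f n + 2 ^ (n / 2) ≤ 2 ^ n := by omega
  have : (f n : ℤ) + 2 ^ (n / 2) ≤ 2 ^ n := by exact_mod_cast this
  linarith

lemma two_pow_sub_lt_f {n : ℕ} (hn : 2 ≤ n) : 2 ^ n - 8 * 2 ^ (n / 2) < (f n : ℤ) := by
  have hcount := f_add_card_nonCoprimeSubsets n
  have hbad := card_nonCoprimeSubsets_le_sum hn
  rw [← insert_Icc_add_one_left_eq_Icc hn, sum_insert (by simp)] at hbad
  simp only [Nat.reduceAdd] at hbad
  have hsum := sum_Icc_three_two_pow_div_le n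
  have herr := sub_two_mul_two_pow_div_three_lt n
  have : 2 ^ n < f n + 8 * 2 ^ (n / 2) := by omega
  have : (2 : ℤ) ^ n < f n + 8 * 2 ^ (n / 2) := by exact_mod_cast this
  linarith

lemma sq_sub_mul_pos_of_bounds {x y a b c : ℤ} (hy : 0 < y) (hyx : y ≤ x)
    (ha : 2 ^ 8 * x - 2 ^ 7 * y < a) (hb0 : 0 ≤ b) (hb : b ≤ x - y) (hc : c ≤ 2 ^ 16 * x) :
    0 < a ^ 2 - b * c := by
  have hsq : (2 ^ 8 * x - 2 ^ 7 * y) ^ 2 < a ^ 2 := pow_lt_pow_left₀ ha (by linarith) two_ne_zero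
  have hprod : b * c ≤ (x - y) * (2 ^ 16 * x) := mul_le_mul_of_nonneg_left hc hb0 |>.trans
    (mul_le_mul_of_nonneg_right hb (by linarith))
  nlinarith

theorem stmt_10 (n : ℕ) (hn : 36 ≤ n) :
    (f n : ℤ) ^ 2 - f (n - 8) * f (n + 8) > 0 := by
  obtain ⟨m, rfl⟩ : ∃ m, n = m + 8 := ⟨n - 8, by omega⟩
  rw [Nat.add_sub_cancel, add_assoc]
  refine sq_sub_mul_pos_of_bounds (x := 2 ^ m) (y := 2 ^ (m / 2)) (by positivity)
    (pow_le_pow_right₀ one_le_two (Nat.div_le_self m 2)) ?_ (Int.natCast_nonneg _)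
    (f_le_two_pow_sub m) ?_
  · have := two_pow_sub_lt_f (n := m + 8) (by omega)
    rw [show (m + 8) / 2 = m / 2 + 4 by omega, pow_add, pow_add] at this
    linarith
  · have := f_le_two_pow_sub (m + 16)
    rw [pow_add] at this
    linarith [pow_pos (two_pos : (0 : ℤ) < 2) ((m + 16) / 2)]
end

section
/- For every integer k ≥ 9 and every integer n ≥ k + 1, f(n)² − f(n−k)·f(n+k) > 0. -/
open Finset

theorem card_filter_dvd_Icc (n d : ℕ) : #{x ∈ Icc 1 n | d ∣ x} = n / d := by
  rw [← Nat.Ioc_filter_dvd_card_eq_div, ← Icc_add_one_left_eq_Ioc, zero_add]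

theorem f_add_two_pow_div_le (n : ℕ) {d : ℕ} (hd : d ≠ 1) : f n + 2 ^ (n / d) ≤ 2 ^ n := by
  have hdisj : Disjoint {A ∈ (Icc 1 n).powerset | A.gcd id = 1}
      {x ∈ Icc 1 n | d ∣ x}.powerset := by
    refine disjoint_left.mpr fun A hA hAd => hd (Nat.dvd_one.mp ?_)
    rw [← (mem_filter.mp hA).2]
    exact dvd_gcd fun x hx => (mem_filter.mp (mem_powerset.mp hAd hx)).2
  have hsub : {A ∈ (Icc 1 n).powerset | A.gcd id = 1} ∪ {x ∈ Icc 1 n | d ∣ x}.powerset ⊆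
      (Icc 1 n).powerset :=
    union_subset (filter_subset _ _) (powerset_mono.mpr (filter_subset _ _))
  simpa [f, card_union_of_disjoint hdisj, card_filter_dvd_Icc] using card_le_card hsub

theorem card_filter_gcd_ne_one_le (n : ℕ) :
    #{A ∈ (Icc 1 n).powerset | A.gcd id ≠ 1} ≤ 1 + ∑ d ∈ Icc 2 n, 2 ^ (n / d) := by
  have hsub : {A ∈ (Icc 1 n).powerset | A.gcd id ≠ 1} ⊆
      insert ∅ ((Icc 2 n).biUnion fun d => {x ∈ Icc 1 n | d ∣ x}.powerset) := by
    intro A hA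
    obtain ⟨hAn, hgcd⟩ := mem_filter.mp hA
    rw [mem_powerset] at hAn
    obtain rfl | ⟨x, hx⟩ := A.eq_empty_or_nonempty
    · exact mem_insert_self _ _
    have hx' := mem_Icc.mp (hAn hx)
    have hle : A.gcd id ≤ x := Nat.le_of_dvd (by omega) (gcd_dvd hx)
    have hpos : 0 < A.gcd id := Nat.pos_of_dvd_of_pos (gcd_dvd hx) hx'.1
    refine mem_insert_of_mem (mem_biUnion.mpr ⟨A.gcd id, mem_Icc.mpr (by omega), ?_⟩)
    exact mem_powerset.mpr fun a ha => mem_filter.mpr ⟨hAn ha, gcd_dvd ha⟩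
  calc _ ≤ _ := card_le_card hsub
    _ ≤ 1 + #((Icc 2 n).biUnion fun d => {x ∈ Icc 1 n | d ∣ x}.powerset) := by
      rw [add_comm]; exact card_insert_le _ _
    _ ≤ 1 + ∑ d ∈ Icc 2 n, #{x ∈ Icc 1 n | d ∣ x}.powerset := by gcongr; exact card_biUnion_le
    _ = 1 + ∑ d ∈ Icc 2 n, 2 ^ (n / d) := by simp only [card_powerset, card_filter_dvd_Icc]

theorem sub_two_mul_two_pow_div_four_le (n : ℕ) : (n - 2) * 2 ^ (n / 4) ≤ 2 ^ (n / 2 + 1) := by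
  rcases Nat.lt_or_ge n 2 with hn | hn
  · simp [Nat.sub_eq_zero_of_le hn.le]
  have he : n / 2 - n / 4 - 1 < 2 ^ (n / 2 - n / 4 - 1) := Nat.lt_two_pow_self
  calc (n - 2) * 2 ^ (n / 4) ≤ 2 ^ 2 * 2 ^ (n / 2 - n / 4 - 1) * 2 ^ (n / 4) := by
        gcongr; omega
    _ = 2 ^ (n / 2 + 1) := by rw [← pow_add, ← pow_add]; congr 1; omega

theorem sum_Icc_two_pow_div_le {n : ℕ} (hn : 3 ≤ n) :
    ∑ d ∈ Icc 2 n, 2 ^ (n / d) ≤ 2 ^ (n / 2) + 2 ^ (n / 3) + (n - 3) * 2 ^ (n / 4) := by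
  have hsplit : Icc 2 n = insert 2 (insert 3 (Icc 4 n)) := by
    ext x; simp only [mem_Icc, mem_insert]; omega
  rw [hsplit, sum_insert (by simp), sum_insert (by simp), ← add_assoc]
  gcongr
  calc ∑ d ∈ Icc 4 n, 2 ^ (n / d) ≤ ∑ _d ∈ Icc 4 n, 2 ^ (n / 4) :=
        sum_le_sum fun d hd => Nat.pow_le_pow_right two_pos
          (Nat.div_le_div_left (mem_Icc.mp hd).1 (by norm_num))
    _ = (n - 3) * 2 ^ (n / 4) := by rw [sum_const, Nat.card_Icc, smul_eq_mul]; congr 1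

theorem one_add_sum_Icc_two_pow_div_le (n : ℕ) :
    1 + ∑ d ∈ Icc 2 n, 2 ^ (n / d) ≤ 2 ^ (n / 2 + 2) := by
  rcases Nat.lt_or_ge n 3 with hn | hn
  · interval_cases n <;> decide
  have h3 : 2 ^ (n / 3) ≤ 2 ^ (n / 2) := Nat.pow_le_pow_right two_pos (by omega)
  have h4 := sub_two_mul_two_pow_div_four_le n
  have hsplit : (n - 2) * 2 ^ (n / 4) = (n - 3) * 2 ^ (n / 4) + 2 ^ (n / 4) := by
    rw [← Nat.succ_mul]; congr 1; omega
  have hpow : 2 ^ (n / 2 + 2) = 2 ^ (n / 2) + 2 ^ (n / 2) + 2 ^ (n / 2 + 1) := by ring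
  have := sum_Icc_two_pow_div_le hn
  have : 1 ≤ 2 ^ (n / 4) := Nat.one_le_two_pow
  omega

theorem two_pow_le_f_add (n : ℕ) : 2 ^ n ≤ f n + 2 ^ (n / 2 + 2) := by
  have hsplit : f n + #{A ∈ (Icc 1 n).powerset | A.gcd id ≠ 1} = 2 ^ n := by
    rw [f, card_filter_add_card_filter_not, card_powerset, Nat.card_Icc, Nat.add_sub_cancel]
  have := card_filter_gcd_ne_one_le n
  have := one_add_sum_Icc_two_pow_div_le n
  omega

theorem stmt_11 (k n : ℕ) (hk : 9 ≤ k) (hn : k + 1 ≤ n) :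
    (f n : ℤ) ^ 2 - f (n - k) * f (n + k) > 0 := by
  have hlow := two_pow_le_f_add n
  have hmid := f_add_two_pow_div_le (n - k) (d := 2) (by norm_num)
  have hhigh := (Nat.le_add_right _ _).trans (f_add_two_pow_div_le (n + k) (d := 2) (by norm_num))
  have ha_le : 2 ^ (n / 2 + 2) ≤ 2 ^ n := Nat.pow_le_pow_right two_pos (by omega)
  have hgap : 4 * 2 ^ (n / 2 + 2) ≤ 2 ^ ((n - k) / 2) * 2 ^ k := by
    rw [← pow_add, show 4 = 2 ^ 2 from rfl, ← pow_add]
    exact Nat.pow_le_pow_right two_pos (by omega)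
  have hsplit : 2 ^ (n - k) * 2 ^ k = 2 ^ n := by rw [← pow_add, Nat.sub_add_cancel (by omega)]
  rw [pow_add] at hhigh
  zify at *
  set x : ℤ := 2 ^ n
  set a : ℤ := 2 ^ (n / 2 + 2)
  have ha : 0 < a := by positivity
  have hx : 0 < x := by positivity
  rw [gt_iff_lt, sub_pos]
  calc (f (n - k) : ℤ) * f (n + k)
      ≤ (2 ^ (n - k) - 2 ^ ((n - k) / 2)) * (x * 2 ^ k) := by gcongr <;> linarith
    _ = x * x - 2 ^ ((n - k) / 2) * 2 ^ k * x := by rw [← hsplit]; ring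
    _ ≤ x * x - 4 * a * x := by nlinarith
    _ < (x - a) ^ 2 := by nlinarith
    _ ≤ (f n : ℤ) ^ 2 := by gcongr; linarith
end
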